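/- arXiv:1612.05015 — 4 statements merged into one kernel-verified Lean document; each statement's English description precedes it below -/
import Mathlib

section
/- Let (a_n)_{n≥1} be a nondecreasing sequence of nonnegative extended reals with limit a_∞ ∈ [0,∞]. Then lim_{λ→(1/5)⁺} (5λ-1) Σ_{n=1}^∞ (5λ)^{-n} a_n = a_∞, where the limit is taken over λ ∈ (1/5, 1/3). -/
open Filter Set
open scoped ENNReal

private lemma geom_key {x : ℝ≥0∞} (h1 : 1 < x) (hx : x ≠ ⊤) :
    (x - 1) * ∑' n : ℕ, (x⁻¹) ^ (n + 1) = 1 := by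
  have hx0 : x ≠ 0 := by positivity
  have hinv_lt : x⁻¹ < 1 := ENNReal.inv_lt_one.mpr h1
  have hsum : ∑' n : ℕ, (x⁻¹) ^ (n + 1) = x⁻¹ * (1 - x⁻¹)⁻¹ := by
    simp_rw [pow_succ']
    rw [ENNReal.tsum_mul_left, ENNReal.tsum_geometric]
  have hkey : (x - 1) * x⁻¹ = 1 - x⁻¹ := by
    rw [ENNReal.sub_mul (fun _ _ => ENNReal.inv_ne_top.mpr hx0),
      ENNReal.mul_inv_cancel hx0 hx, one_mul]
  rw [hsum, ← mul_assoc, hkey, ENNReal.mul_inv_cancel]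
  · exact (tsub_pos_of_lt hinv_lt).ne'
  · exact (lt_of_le_of_lt tsub_le_self ENNReal.one_lt_top).ne

/-- For a nondecreasing sequence `a : ℕ → ℝ≥0∞` (indexed from 1) with supremum `a_∞`,
`(5λ-1) Σ_{n≥1} (5λ)^{-n} a_n → a_∞` as `λ ↓ 1/5` within `(1/5, 1/3)`. -/
theorem stmt_1 (a : ℕ → ENNReal) (hmono : Monotone a) :
    Tendsto
      (fun l : ℝ => ENNReal.ofReal (5 * l - 1) *
        ∑' n : ℕ, a (n + 1) / (ENNReal.ofReal (5 * l)) ^ (n + 1))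
      (nhdsWithin (1 / 5) (Set.Ioo (1 / 5) (1 / 3)))
      (nhds (⨆ n, a (n + 1))) := by
  set S := ⨆ n, a (n + 1) with hS
  set f : ℝ → ℝ≥0∞ := fun l => ENNReal.ofReal (5 * l - 1) *
      ∑' n : ℕ, a (n + 1) / (ENNReal.ofReal (5 * l)) ^ (n + 1) with hf
  have hne : NeBot (nhdsWithin (1/5 : ℝ) (Set.Ioo (1/5) (1/3))) :=
    left_nhdsWithin_Ioo_neBot (by norm_num)
  -- basic facts about x = ofReal (5 l) for l in the interval
  have hx1 : ∀ l : ℝ, l ∈ Set.Ioo (1/5 : ℝ) (1/3) → 1 < ENNReal.ofReal (5 * l) := by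
    intro l hl
    rw [ENNReal.one_lt_ofReal]
    nlinarith [hl.1]
  have hofr : ∀ l : ℝ, ENNReal.ofReal (5 * l - 1) = ENNReal.ofReal (5 * l) - 1 := by
    intro l
    rw [ENNReal.ofReal_sub _ zero_le_one, ENNReal.ofReal_one]
  have hfeq : ∀ l : ℝ, f l = (ENNReal.ofReal (5 * l) - 1) *
      ∑' n : ℕ, a (n + 1) * ((ENNReal.ofReal (5 * l))⁻¹) ^ (n + 1) := by
    intro l
    simp only [hf, hofr, div_eq_mul_inv]
    congr 1
    exact tsum_congr fun n => by rw [ENNReal.inv_pow]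
  -- upper bound : f l ≤ S on the interval
  have hub : ∀ l ∈ Set.Ioo (1/5 : ℝ) (1/3), f l ≤ S := by
    intro l hl
    set x := ENNReal.ofReal (5 * l)
    have h1 : 1 < x := hx1 l hl
    rw [hfeq]
    calc (x - 1) * ∑' n : ℕ, a (n + 1) * (x⁻¹) ^ (n + 1)
        ≤ (x - 1) * ∑' n : ℕ, S * (x⁻¹) ^ (n + 1) := by
          gcongr with n
          exact le_iSup (fun n => a (n + 1)) n
      _ = S * ((x - 1) * ∑' n : ℕ, (x⁻¹) ^ (n + 1)) := by
          rw [ENNReal.tsum_mul_left]; ring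
      _ = S := by rw [geom_key h1 ENNReal.ofReal_ne_top, mul_one]
  -- lower bound : for each N, a (N+1) * (x⁻¹)^N ≤ f l
  have hlb : ∀ N : ℕ, ∀ l ∈ Set.Ioo (1/5 : ℝ) (1/3),
      a (N + 1) * ((ENNReal.ofReal (5 * l))⁻¹) ^ N ≤ f l := by
    intro N l hl
    set x := ENNReal.ofReal (5 * l)
    have h1 : 1 < x := hx1 l hl
    rw [hfeq]
    calc a (N + 1) * (x⁻¹) ^ N
        = a (N + 1) * (x⁻¹) ^ N * ((x - 1) * ∑' n : ℕ, (x⁻¹) ^ (n + 1)) := by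
          rw [geom_key h1 ENNReal.ofReal_ne_top, mul_one]
      _ = (x - 1) * ∑' n : ℕ, a (N + 1) * ((x⁻¹) ^ N * (x⁻¹) ^ (n + 1)) := by
          simp_rw [ENNReal.tsum_mul_left]; ring
      _ ≤ (x - 1) * ∑' n : ℕ, a (n + N + 1) * (x⁻¹) ^ (n + N + 1) := by
          gcongr with n
          · exact hmono (by omega)
          · rw [← pow_add]
            apply le_of_eq
            congr 1
            omega
      _ ≤ (x - 1) * ∑' n : ℕ, a (n + 1) * (x⁻¹) ^ (n + 1) := by
          exact mul_le_mul_right (ENNReal.tsum_comp_le_tsum_of_injective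
            (add_left_injective N) (fun n => a (n + 1) * (x⁻¹) ^ (n + 1))) _
  refine tendsto_of_le_liminf_of_limsup_le ?_ ?_ (by isBoundedDefault) (by isBoundedDefault)
  · -- S ≤ liminf f
    rw [hS]
    apply iSup_le
    intro N
    have hg : Tendsto (fun l : ℝ => a (N + 1) * ((ENNReal.ofReal (5 * l))⁻¹) ^ N)
        (nhdsWithin (1/5) (Set.Ioo (1/5) (1/3))) (nhds (a (N + 1))) := by
      have h0 : Tendsto (fun l : ℝ => ((ENNReal.ofReal (5 * l))⁻¹) ^ N)
          (nhdsWithin (1/5) (Set.Ioo (1/5) (1/3))) (nhds 1) := by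
        have : Tendsto (fun l : ℝ => ENNReal.ofReal (5 * l))
            (nhdsWithin (1/5) (Set.Ioo (1/5) (1/3))) (nhds 1) := by
          have := (ENNReal.continuous_ofReal.tendsto (5 * (1/5 : ℝ))).comp
            ((continuous_const.mul continuous_id).tendsto (1/5 : ℝ))
          norm_num at this
          exact this.mono_left nhdsWithin_le_nhds
        have := ENNReal.Tendsto.pow (this.inv) (n := N)
        simpa using this
      have := ENNReal.Tendsto.const_mul (a := a (N + 1)) h0 (Or.inl one_ne_zero)
      simpa using this
    have h1 : a (N + 1) = liminf (fun l : ℝ => a (N + 1) * ((ENNReal.ofReal (5 * l))⁻¹) ^ N)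
        (nhdsWithin (1/5) (Set.Ioo (1/5) (1/3))) := (hg.liminf_eq).symm
    rw [h1]
    exact liminf_le_liminf (eventually_mem_nhdsWithin.mono (hlb N))
      (by isBoundedDefault) (by isBoundedDefault)
  · -- limsup f ≤ S
    exact limsup_le_of_le (by isBoundedDefault) (eventually_mem_nhdsWithin.mono hub)
end

section
/- Let (a_n)_{n≥1} be a nondecreasing sequence of nonnegative reals with limit a_∞, let (λ_i) ⊆ (1/5,1/3) with λ_i ↓ 1/5, and let Φ : ℕ → ℕ be increasing with (5λ_i - 1)Φ(i) ≥ i for all i ≥ 1. Then lim_{i→∞} (5λ_i - 1) Σ_{n=1}^{Φ(i)} (5λ_i)^{-n} a_n = a_∞. -/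
open Filter

lemma geomRange (q : ℝ) (hq : 1 < q) (M : ℕ) :
    (q - 1) * ∑ n ∈ Finset.range M, (q⁻¹) ^ (n + 1) = 1 - (q⁻¹) ^ M := by
  have hq0 : q ≠ 0 := by linarith
  induction M with
  | zero => simp
  | succ m ih =>
    rw [Finset.sum_range_succ, mul_add, ih]
    have : q * (q⁻¹) ^ (m + 1) = (q⁻¹) ^ m := by
      rw [pow_succ]
      field_simp
    nlinarith [this]

lemma geomIco (q : ℝ) (hq : 1 < q) (K M : ℕ) (h : K ≤ M) :
    (q - 1) * ∑ n ∈ Finset.Ico K M, (q⁻¹) ^ (n + 1) = (q⁻¹) ^ K - (q⁻¹) ^ M := by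
  rw [Finset.sum_Ico_eq_sub _ h, mul_sub, geomRange q hq, geomRange q hq]
  ring

/-- Truncated weighted averages: if `a_n ↑ a_∞`, `λ_i ↓ 1/5` in `(1/5,1/3)` and
`Φ` is increasing with `(5λ_i-1)Φ(i) ≥ i`, then
`(5λ_i-1) Σ_{n=1}^{Φ(i)} (5λ_i)^{-n} a_n → a_∞`. -/
theorem stmt_4 (a : ℕ → ℝ) (ha : ∀ n, 0 ≤ a n) (hmono : Monotone a)
    (aInf : ℝ) (hlim : Tendsto a atTop (nhds aInf))
    (l : ℕ → ℝ) (hl : ∀ i, l i ∈ Set.Ioo (1 / 5 : ℝ) (1 / 3))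
    (hanti : Antitone l) (hldown : Tendsto l atTop (nhds (1 / 5)))
    (Φ : ℕ → ℕ) (hΦ : Monotone Φ)
    (hΦl : ∀ i : ℕ, 1 ≤ i → (i : ℝ) ≤ (5 * l i - 1) * (Φ i : ℝ)) :
    Tendsto
      (fun i : ℕ => (5 * l i - 1) *
        ∑ n ∈ Finset.range (Φ i), a (n + 1) / (5 * l i) ^ (n + 1))
      atTop (nhds aInf) := by
  have hq1 : ∀ i, 1 < 5 * l i := fun i => by have := (hl i).1; linarith
  have hq2 : ∀ i, 5 * l i - 1 ≤ 1 := fun i => by have := (hl i).2; linarith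
  have hq0 : ∀ i, (0:ℝ) < 5 * l i := fun i => by have := hq1 i; linarith
  have haInf : ∀ n, a n ≤ aInf := hmono.ge_of_tendsto hlim
  have haInf0 : (0:ℝ) ≤ aInf := le_trans (ha 0) (haInf 0)
  have hrpos : ∀ i, 0 < (5 * l i)⁻¹ := fun i => inv_pos.mpr (hq0 i)
  have hterm : ∀ i n, a (n+1) / (5 * l i) ^ (n+1) = a (n+1) * ((5 * l i)⁻¹) ^ (n+1) := by
    intro i n; rw [div_eq_mul_inv, inv_pow]
  set S := fun i : ℕ => (5 * l i - 1) *
      ∑ n ∈ Finset.range (Φ i), a (n + 1) / (5 * l i) ^ (n + 1) with hS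
  -- upper bound
  have hupper : ∀ i, S i ≤ aInf := by
    intro i
    have h1 : ∑ n ∈ Finset.range (Φ i), a (n + 1) / (5 * l i) ^ (n + 1)
        ≤ ∑ n ∈ Finset.range (Φ i), aInf * ((5 * l i)⁻¹) ^ (n+1) := by
      apply Finset.sum_le_sum
      intro n _
      rw [hterm]
      exact mul_le_mul_of_nonneg_right (haInf _) (le_of_lt (pow_pos (hrpos i) _))
    calc S i ≤ (5 * l i - 1) * ∑ n ∈ Finset.range (Φ i), aInf * ((5 * l i)⁻¹) ^ (n+1) :=
          mul_le_mul_of_nonneg_left h1 (by have := hq1 i; linarith)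
      _ = aInf * ((5 * l i - 1) * ∑ n ∈ Finset.range (Φ i), ((5 * l i)⁻¹) ^ (n+1)) := by
          rw [← Finset.mul_sum]; ring
      _ = aInf * (1 - ((5 * l i)⁻¹) ^ (Φ i)) := by rw [geomRange _ (hq1 i)]
      _ ≤ aInf * 1 := mul_le_mul_of_nonneg_left (by nlinarith [pow_pos (hrpos i) (Φ i)]) haInf0
      _ = aInf := mul_one _
  -- Φ grows
  have hΦge : ∀ i : ℕ, 1 ≤ i → i ≤ Φ i := by
    intro i hi
    have h1 := hΦl i hi
    have h2 : (5 * l i - 1) * (Φ i : ℝ) ≤ (Φ i : ℝ) := by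
      have h3 := hq2 i
      have h4 : (0:ℝ) ≤ (Φ i : ℝ) := Nat.cast_nonneg _
      nlinarith
    exact_mod_cast le_trans h1 h2
  -- tail term tends to 0
  have htail : Tendsto (fun i => ((5 * l i)⁻¹) ^ (Φ i)) atTop (nhds 0) := by
    apply squeeze_zero' (Eventually.of_forall fun i => le_of_lt (pow_pos (hrpos i) _))
      (g := fun i : ℕ => 1 / ((i:ℝ) + 1)) ?_ tendsto_one_div_add_atTop_nhds_zero_nat
    filter_upwards [eventually_ge_atTop 1] with i hi
    have hb : (i:ℝ) + 1 ≤ (5 * l i) ^ (Φ i) := by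
      have h1 : 1 + (Φ i : ℝ) * (5 * l i - 1) ≤ (1 + (5 * l i - 1)) ^ (Φ i) :=
        one_add_mul_le_pow (by have := hq1 i; linarith) (Φ i)
      have h2 : (i:ℝ) ≤ (5 * l i - 1) * (Φ i : ℝ) := hΦl i hi
      have h3 : (1 + (5 * l i - 1)) = 5 * l i := by ring
      rw [h3] at h1
      nlinarith
    have hpos : (0:ℝ) < (i:ℝ) + 1 := by positivity
    rw [inv_pow]
    rw [one_div]
    exact inv_anti₀ hpos hb
  -- r tends to 1
  have h5l : Tendsto (fun i => 5 * l i) atTop (nhds 1) := by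
    have h := hldown.const_mul (5:ℝ)
    norm_num at h
    exact h
  have hrtend : Tendsto (fun i => (5 * l i)⁻¹) atTop (nhds 1) := by
    have h := h5l.inv₀ one_ne_zero
    simpa using h
  rw [tendsto_order]
  constructor
  · -- lower bound
    intro c hc
    obtain ⟨N, hcN, hN1⟩ :=
      ((hlim.eventually (eventually_gt_nhds hc)).and (eventually_ge_atTop 1)).exists
    have hB : Tendsto (fun i => a N * (((5 * l i)⁻¹) ^ (N-1) - ((5 * l i)⁻¹) ^ (Φ i)))
        atTop (nhds (a N)) := by
      have h1 : Tendsto (fun i => ((5 * l i)⁻¹) ^ (N-1) - ((5 * l i)⁻¹) ^ (Φ i))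
          atTop (nhds (1 - 0)) := by
        have := (hrtend.pow (N-1)).sub htail
        simpa using this
      have h2 := h1.const_mul (a N)
      simpa using h2
    filter_upwards [hB.eventually (eventually_gt_nhds hcN), eventually_ge_atTop N] with i hBi hiN
    refine lt_of_lt_of_le hBi ?_
    have hΦiN : N - 1 ≤ Φ i := le_trans (by omega) (hΦge i (le_trans hN1 hiN))
    have hsum : ∑ n ∈ Finset.Ico (N-1) (Φ i), a N * ((5 * l i)⁻¹) ^ (n+1)
        ≤ ∑ n ∈ Finset.range (Φ i), a (n+1) / (5 * l i) ^ (n+1) := by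
      calc ∑ n ∈ Finset.Ico (N-1) (Φ i), a N * ((5 * l i)⁻¹) ^ (n+1)
          ≤ ∑ n ∈ Finset.Ico (N-1) (Φ i), a (n+1) / (5 * l i) ^ (n+1) := by
            apply Finset.sum_le_sum
            intro n hn
            rw [hterm]
            refine mul_le_mul_of_nonneg_right ?_ (le_of_lt (pow_pos (hrpos i) _))
            apply hmono
            have := (Finset.mem_Ico.mp hn).1
            omega
        _ ≤ ∑ n ∈ Finset.range (Φ i), a (n+1) / (5 * l i) ^ (n+1) := by
            apply Finset.sum_le_sum_of_subset_of_nonneg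
            · intro x hx
              simp only [Finset.mem_range]
              exact (Finset.mem_Ico.mp hx).2
            · intro n _ _
              exact div_nonneg (ha _) (le_of_lt (pow_pos (hq0 i) _))
    calc a N * (((5 * l i)⁻¹) ^ (N-1) - ((5 * l i)⁻¹) ^ (Φ i))
        = a N * ((5 * l i - 1) * ∑ n ∈ Finset.Ico (N-1) (Φ i), ((5 * l i)⁻¹) ^ (n+1)) := by
          rw [geomIco _ (hq1 i) _ _ hΦiN]
      _ = (5 * l i - 1) * ∑ n ∈ Finset.Ico (N-1) (Φ i), a N * ((5 * l i)⁻¹) ^ (n+1) := by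
          rw [← Finset.mul_sum]; ring
      _ ≤ (5 * l i - 1) * ∑ n ∈ Finset.range (Φ i), a (n+1) / (5 * l i) ^ (n+1) :=
          mul_le_mul_of_nonneg_left hsum (by have := hq1 i; linarith)
      _ = S i := rfl
  · intro c hc
    exact Eventually.of_forall fun i => lt_of_le_of_lt (hupper i) hc
end

section
/- The Sierpiński gasket K satisfies the chain condition: there exists a constant C₁ > 0 such that for all x, y ∈ K and every positive integer N, there exist points z₀ = x, z₁, …, z_N = y in K with |z_i - z_{i+1}| ≤ C₁ |x-y|/N for all i = 0, …, N-1. -/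
/-- The three corner points of the Sierpiński gasket. -/
noncomputable def sgPt : Fin 3 → ℝ × ℝ
  | 0 => (0, 0)
  | 1 => (1, 0)
  | 2 => (1 / 2, Real.sqrt 3 / 2)

/-- The three contraction maps of the Sierpiński gasket IFS. -/
noncomputable def sgMap (i : Fin 3) (x : ℝ × ℝ) : ℝ × ℝ := (x + sgPt i) / 2

lemma sgMap_coords (i : Fin 3) (x : ℝ × ℝ) :
    sgMap i x = ((x.1 + (sgPt i).1) / 2, (x.2 + (sgPt i).2) / 2) := by
  ext <;> simp [sgMap]

lemma dist_sgMap (i : Fin 3) (x y : ℝ × ℝ) :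
    dist (sgMap i x) (sgMap i y) = dist x y / 2 := by
  rw [Prod.dist_eq, Prod.dist_eq, sgMap_coords, sgMap_coords]
  have h : ∀ a b c : ℝ, dist ((a+c)/2) ((b+c)/2) = dist a b / 2 := by
    intro a b c
    rw [Real.dist_eq, Real.dist_eq, show (a+c)/2 - (b+c)/2 = (a-b)/2 by ring, abs_div]
    norm_num
  rw [h, h, max_div_div_right (by norm_num : (0:ℝ) ≤ 2)]

def sgT : Set (ℝ × ℝ) :=
  {p | 0 ≤ p.2 ∧ p.2 ≤ Real.sqrt 3 * p.1 ∧ p.2 ≤ Real.sqrt 3 * (1 - p.1)}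

lemma sqrt3_ge_one : (1:ℝ) ≤ Real.sqrt 3 := by
  rw [show (1:ℝ) = Real.sqrt 1 by simp]
  exact Real.sqrt_le_sqrt (by norm_num)

lemma sqrt3_le_two : Real.sqrt 3 ≤ 2 := by
  rw [show (2:ℝ) = Real.sqrt 4 by rw [show (4:ℝ) = 2^2 by norm_num, Real.sqrt_sq]; norm_num]
  exact Real.sqrt_le_sqrt (by norm_num)

lemma sgPt_mem_T : ∀ i, sgPt i ∈ sgT := by
  have h1 := sqrt3_ge_one
  intro i
  have h0 := Real.sqrt_nonneg 3
  fin_cases i <;> refine ⟨?_, ?_, ?_⟩ <;> simp [sgT, sgPt] <;> nlinarith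

lemma sgMap_mem_T {p : ℝ × ℝ} (hp : p ∈ sgT) (i : Fin 3) : sgMap i p ∈ sgT := by
  have h1 := sqrt3_ge_one
  obtain ⟨h2, h3, h4⟩ := hp
  fin_cases i <;>
    · rw [sgMap_coords]
      refine ⟨by simp [sgPt]; nlinarith, ?_, ?_⟩ <;> simp [sgPt] <;> nlinarith

lemma sgT_coord_bounds {p : ℝ × ℝ} (hp : p ∈ sgT) :
    0 ≤ p.1 ∧ p.1 ≤ 1 ∧ 0 ≤ p.2 ∧ p.2 ≤ 1 := by
  have h1 := sqrt3_ge_one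
  have h2 := sqrt3_le_two
  obtain ⟨ha, hb, hc⟩ := hp
  refine ⟨by nlinarith, by nlinarith, ha, by nlinarith⟩

lemma sgT_diam {p q : ℝ × ℝ} (hp : p ∈ sgT) (hq : q ∈ sgT) : dist p q ≤ 1 := by
  obtain ⟨a1, a2, a3, a4⟩ := sgT_coord_bounds hp
  obtain ⟨b1, b2, b3, b4⟩ := sgT_coord_bounds hq
  rw [Prod.dist_eq]
  apply max_le <;> rw [Real.dist_eq, abs_le] <;> constructor <;> linarith

lemma sgT_closed : IsClosed sgT := by
  have : sgT = {p : ℝ×ℝ | 0 ≤ p.2} ∩ ({p : ℝ×ℝ | p.2 ≤ Real.sqrt 3 * p.1} ∩ {p : ℝ×ℝ | p.2 ≤ Real.sqrt 3 * (1 - p.1)}) := by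
    ext p; simp [sgT]
  rw [this]
  refine (isClosed_le continuous_const continuous_snd).inter
    ((isClosed_le continuous_snd (continuous_const.mul continuous_fst)).inter
     (isClosed_le continuous_snd (continuous_const.mul (continuous_const.sub continuous_fst))))

lemma sgT_compact : IsCompact sgT := by
  refine Metric.isCompact_of_isClosed_isBounded sgT_closed ?_
  rw [Metric.isBounded_iff_subset_closedBall (0:ℝ×ℝ)]
  refine ⟨2, fun p hp => ?_⟩
  obtain ⟨a1, a2, a3, a4⟩ := sgT_coord_bounds hp
  simp only [Metric.mem_closedBall, Prod.dist_eq]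
  apply max_le <;> rw [Real.dist_eq, abs_le] <;> constructor <;> simp <;> linarith

section K
variable {K : Set (ℝ × ℝ)} (hKc : IsCompact K) (hKne : K.Nonempty)
  (hK : K = sgMap 0 '' K ∪ sgMap 1 '' K ∪ sgMap 2 '' K)

lemma cover (hK : K = sgMap 0 '' K ∪ sgMap 1 '' K ∪ sgMap 2 '' K)
    {x : ℝ×ℝ} (hx : x ∈ K) : ∃ i : Fin 3, ∃ y ∈ K, sgMap i y = x := by
  rw [hK] at hx
  rcases hx with (⟨y,hy,h⟩|⟨y,hy,h⟩)|⟨y,hy,h⟩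
  exacts [⟨0,y,hy,h⟩, ⟨1,y,hy,h⟩, ⟨2,y,hy,h⟩]

lemma image_sub (hK : K = sgMap 0 '' K ∪ sgMap 1 '' K ∪ sgMap 2 '' K)
    (i : Fin 3) : sgMap i '' K ⊆ K := by
  intro x hx
  rw [hK]
  fin_cases i
  · exact Or.inl (Or.inl hx)
  · exact Or.inl (Or.inr hx)
  · exact Or.inr hx

include hKc hKne hK in
lemma K_sub_T : K ⊆ sgT := by
  obtain ⟨x₀, hx₀K, hmax⟩ := hKc.exists_isMaxOn hKne (Metric.continuous_infDist_pt sgT).continuousOn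
  have hTne : sgT.Nonempty := ⟨_, sgPt_mem_T 0⟩
  have hzero : Metric.infDist x₀ sgT = 0 := by
    obtain ⟨i, y, hyK, hxy⟩ := cover hK hx₀K
    obtain ⟨t, htT, ht⟩ := sgT_compact.exists_infDist_eq_dist hTne y
    have h1 : Metric.infDist x₀ sgT ≤ dist y t / 2 := by
      rw [← hxy, ← dist_sgMap i y t]
      exact Metric.infDist_le_dist_of_mem (sgMap_mem_T htT i)
    have h2 : Metric.infDist y sgT ≤ Metric.infDist x₀ sgT := hmax hyK
    have h3 := Metric.infDist_nonneg (x := x₀) (s := sgT)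
    rw [← ht] at h1
    linarith
  intro x hx
  have : Metric.infDist x sgT = 0 :=
    le_antisymm (hzero ▸ hmax hx) Metric.infDist_nonneg
  exact (sgT_closed.mem_iff_infDist_zero hTne).mpr this

lemma sgMap_fixed (i : Fin 3) : sgMap i (sgPt i) = sgPt i := by
  rw [sgMap_coords]
  have : ∀ a : ℝ, (a + a) / 2 = a := fun a => by ring
  ext <;> simp [this]

lemma mid_comm (i j : Fin 3) : sgMap i (sgPt j) = sgMap j (sgPt i) := by
  rw [sgMap_coords, sgMap_coords]; ext <;> simp <;> ring

include hKc hKne hK in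
lemma sgPt_mem_K (i : Fin 3) : sgPt i ∈ K := by
  obtain ⟨a, haK⟩ := hKne
  have hseq : ∀ n, (sgMap i)^[n] a ∈ K := by
    intro n
    induction n with
    | zero => exact haK
    | succ n ih =>
      rw [Function.iterate_succ_apply']
      exact image_sub hK i ⟨_, ih, rfl⟩
  have hdist : ∀ n, dist ((sgMap i)^[n] a) (sgPt i) = dist a (sgPt i) / 2^n := by
    intro n
    induction n with
    | zero => simp
    | succ n ih =>
      rw [Function.iterate_succ_apply', ← sgMap_fixed i, dist_sgMap, sgMap_fixed, ih]
      ring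
  have htend : Filter.Tendsto (fun n => (sgMap i)^[n] a) Filter.atTop (nhds (sgPt i)) := by
    rw [tendsto_iff_dist_tendsto_zero]
    simp only [hdist]
    rw [show (fun n => dist a (sgPt i) / 2^n) = (fun n => dist a (sgPt i) * (1/2:ℝ)^n) by
      funext n; rw [div_pow, one_pow]; ring]
    simpa using (tendsto_pow_atTop_nhds_zero_of_lt_one (by norm_num) (by norm_num : (1/2:ℝ) < 1)).const_mul (dist a (sgPt i))
  exact hKc.isClosed.mem_of_tendsto htend (Filter.Eventually.of_forall hseq)

end K


def SChain (K : Set (ℝ×ℝ)) (x y : ℝ×ℝ) (m : ℕ) (ε : ℝ) : Prop :=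
  ∃ z : ℕ → ℝ×ℝ, z 0 = x ∧ z m = y ∧ (∀ i ≤ m, z i ∈ K) ∧
    ∀ i < m, dist (z i) (z (i+1)) ≤ ε

namespace SChain

lemma single {K : Set (ℝ×ℝ)} {x y : ℝ×ℝ} {ε : ℝ} (hx : x ∈ K) (hy : y ∈ K)
    (h : dist x y ≤ ε) : SChain K x y 1 ε := by
  refine ⟨fun i => if i = 0 then x else y, by simp, by simp, ?_, ?_⟩
  · intro i _; by_cases h : i = 0 <;> simp [h, hx, hy]
  · intro i hi
    interval_cases i
    simpa using h

lemma mono_set {K K' : Set (ℝ×ℝ)} {x y m ε} (hKK : K ⊆ K') (h : SChain K x y m ε) :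
    SChain K' x y m ε := by
  obtain ⟨z, h1, h2, h3, h4⟩ := h
  exact ⟨z, h1, h2, fun i hi => hKK (h3 i hi), h4⟩

lemma mono_eps {K : Set (ℝ×ℝ)} {x y m} {ε ε' : ℝ} (hee : ε ≤ ε') (h : SChain K x y m ε) :
    SChain K x y m ε' := by
  obtain ⟨z, h1, h2, h3, h4⟩ := h
  exact ⟨z, h1, h2, h3, fun i hi => (h4 i hi).trans hee⟩

lemma symm {K : Set (ℝ×ℝ)} {x y m ε} (h : SChain K x y m ε) : SChain K y x m ε := by
  obtain ⟨z, h1, h2, h3, h4⟩ := h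
  refine ⟨fun i => z (m - i), by simp [h2], by simp [h1], fun i _ => h3 _ (Nat.sub_le m i), ?_⟩
  intro i hi
  have e1 : m - i = (m - (i+1)) + 1 := by omega
  dsimp only
  rw [dist_comm, e1]
  exact h4 _ (by omega)

lemma trans {K : Set (ℝ×ℝ)} {x y w m m' ε} (h : SChain K x y m ε)
    (h' : SChain K y w m' ε) : SChain K x w (m + m') ε := by
  obtain ⟨z, h1, h2, h3, h4⟩ := h
  obtain ⟨z', g1, g2, g3, g4⟩ := h'
  refine ⟨fun i => if i ≤ m then z i else z' (i - m), by simp [h1], ?_, ?_, ?_⟩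
  · by_cases hm : m' = 0
    · subst hm; simp [h2, ← g1, ← g2]
    · have : ¬ (m + m' ≤ m) := by omega
      simp [this, g2]
  · intro i hi
    by_cases him : i ≤ m
    · simp [him, h3 i him]
    · simp only [him, if_neg]
      exact g3 _ (by omega)
  · intro i hi
    dsimp only
    rcases lt_trichotomy i m with hlt | heq | hgt
    · rw [if_pos (by omega : i ≤ m), if_pos (by omega : i + 1 ≤ m)]
      exact h4 i hlt
    · subst heq
      have hm' : 0 < m' := by omega
      rw [if_pos le_rfl, if_neg (by omega), show i + 1 - i = 1 by omega, h2, ← g1]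
      exact g4 0 hm'
    · rw [if_neg (by omega), if_neg (by omega), show i + 1 - m = (i - m) + 1 by omega]
      exact g4 _ (by omega)

lemma pad {K : Set (ℝ×ℝ)} {x y m m' ε} (hε : 0 ≤ ε) (hmm : m ≤ m')
    (h : SChain K x y m ε) : SChain K x y m' ε := by
  obtain ⟨z, h1, h2, h3, h4⟩ := h
  refine ⟨fun i => z (min i m), by simp [h1], by simp [hmm, h2], fun i _ => h3 _ (min_le_right _ _), ?_⟩
  intro i hi
  dsimp only
  by_cases him : i < m
  · rw [min_eq_left (by omega), min_eq_left (by omega)]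
    exact h4 i him
  · rw [min_eq_right (by omega), min_eq_right (by omega)]
    simpa using hε

end SChain

lemma dist_comps (i j : Fin 3) (s t : ℝ × ℝ) :
    |(s.1 + (sgPt i).1) - (t.1 + (sgPt j).1)| ≤ 2 * dist (sgMap i s) (sgMap j t) ∧
    |(s.2 + (sgPt i).2) - (t.2 + (sgPt j).2)| ≤ 2 * dist (sgMap i s) (sgMap j t) := by
  rw [sgMap_coords i s, sgMap_coords j t]
  set P1 := ((s.1 + (sgPt i).1) / 2, (s.2 + (sgPt i).2) / 2) with hP1
  set P2 := ((t.1 + (sgPt j).1) / 2, (t.2 + (sgPt j).2) / 2) with hP2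
  have hf : dist P1.1 P2.1 ≤ dist P1 P2 := by rw [Prod.dist_eq]; exact le_max_left _ _
  have hg : dist P1.2 P2.2 ≤ dist P1 P2 := by rw [Prod.dist_eq]; exact le_max_right _ _
  rw [hP1, hP2] at hf hg
  dsimp only at hf hg
  rw [Real.dist_eq] at hf hg
  constructor
  · have e : (s.1 + (sgPt i).1) - (t.1 + (sgPt j).1)
        = 2 * ((s.1 + (sgPt i).1)/2 - (t.1 + (sgPt j).1)/2) := by ring
    rw [e, abs_mul, abs_two]
    linarith
  · have e : (s.2 + (sgPt i).2) - (t.2 + (sgPt j).2)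
        = 2 * ((s.2 + (sgPt i).2)/2 - (t.2 + (sgPt j).2)/2) := by ring
    rw [e, abs_mul, abs_two]
    linarith

lemma sep {i j : Fin 3} (hij : i ≠ j) {u : ℝ × ℝ} (hu : u ∈ sgMap i '' sgT) :
    1/4 ≤ dist u (sgPt j) := by
  have h1 := sqrt3_ge_one
  obtain ⟨s, hs, rfl⟩ := hu
  obtain ⟨c1, c2, c3, c4⟩ := sgT_coord_bounds hs
  obtain ⟨hs1, hs2, hs3⟩ := hs
  have hs22 : s.2 ≤ Real.sqrt 3 / 2 := by linarith
  rw [sgMap_coords, Prod.dist_eq]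
  fin_cases i <;> fin_cases j
  · exact absurd rfl hij
  · refine le_max_of_le_left ?_
    rw [Real.dist_eq]
    refine le_abs.mpr (Or.inr ?_)
    simp only [sgPt]
    linarith
  · refine le_max_of_le_right ?_
    rw [Real.dist_eq]
    refine le_abs.mpr (Or.inr ?_)
    simp only [sgPt]
    linarith
  · refine le_max_of_le_left ?_
    rw [Real.dist_eq]
    refine le_abs.mpr (Or.inl ?_)
    simp only [sgPt]
    linarith
  · exact absurd rfl hij
  · refine le_max_of_le_right ?_
    rw [Real.dist_eq]
    refine le_abs.mpr (Or.inr ?_)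
    simp only [sgPt]
    linarith
  · refine le_max_of_le_right ?_
    rw [Real.dist_eq]
    refine le_abs.mpr (Or.inl ?_)
    simp only [sgPt]
    linarith
  · refine le_max_of_le_right ?_
    rw [Real.dist_eq]
    refine le_abs.mpr (Or.inl ?_)
    simp only [sgPt]
    linarith
  · exact absurd rfl hij

lemma geo {i j : Fin 3} (hij : i ≠ j) {u v : ℝ × ℝ} (hu : u ∈ sgMap i '' sgT)
    (hv : v ∈ sgMap j '' sgT) : dist u (sgMap i (sgPt j)) ≤ 4 * dist u v := by
  have h1 := sqrt3_ge_one
  have h2 := sqrt3_le_two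
  obtain ⟨s, hs, rfl⟩ := hu
  obtain ⟨t, ht, rfl⟩ := hv
  obtain ⟨sc1, sc2, sc3, sc4⟩ := sgT_coord_bounds hs
  obtain ⟨tc1, tc2, tc3, tc4⟩ := sgT_coord_bounds ht
  obtain ⟨hs1, hs2, hs3⟩ := hs
  obtain ⟨ht1, ht2, ht3⟩ := ht
  obtain ⟨hA, hB⟩ := dist_comps i j s t
  have hD0 : (0:ℝ) ≤ dist (sgMap i s) (sgMap j t) := dist_nonneg
  rw [dist_sgMap, Prod.dist_eq, div_le_iff₀ (by norm_num : (0:ℝ) < 2)]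
  set D := dist (sgMap i s) (sgMap j t) with hD
  obtain ⟨hA1, hA2⟩ := abs_le.mp hA
  obtain ⟨hB1, hB2⟩ := abs_le.mp hB
  fin_cases i <;> fin_cases j <;> simp only [sgPt] at hA1 hA2 hB1 hB2 ⊢
  · exact absurd rfl hij
  · -- i=0, j=1
    have P : Real.sqrt 3 * (1 - s.1) ≤ 2 * (1 - s.1) :=
      mul_le_mul_of_nonneg_right h2 (by linarith)
    apply max_le <;> rw [Real.dist_eq, abs_le] <;> constructor <;> linarith
  · -- i=0, j=2
    rcases le_or_gt 0 (s.1 - 1/2) with hw | hw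
    · have P : 1 * (s.1 - 1/2) ≤ Real.sqrt 3 * (s.1 - 1/2) :=
        mul_le_mul_of_nonneg_right h1 hw
      apply max_le <;> rw [Real.dist_eq, abs_le] <;> constructor <;> linarith
    · have P : 1 * (1/2 - s.1) ≤ Real.sqrt 3 * (1/2 - s.1) :=
        mul_le_mul_of_nonneg_right h1 (by linarith)
      apply max_le <;> rw [Real.dist_eq, abs_le] <;> constructor <;> linarith
  · -- i=1, j=0
    have P : Real.sqrt 3 * s.1 ≤ 2 * s.1 := mul_le_mul_of_nonneg_right h2 sc1
    apply max_le <;> rw [Real.dist_eq, abs_le] <;> constructor <;> linarith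
  · exact absurd rfl hij
  · -- i=1, j=2
    rcases le_or_gt 0 (s.1 - 1/2) with hw | hw
    · have P : 1 * (s.1 - 1/2) ≤ Real.sqrt 3 * (s.1 - 1/2) :=
        mul_le_mul_of_nonneg_right h1 hw
      apply max_le <;> rw [Real.dist_eq, abs_le] <;> constructor <;> linarith
    · have P : 1 * (1/2 - s.1) ≤ Real.sqrt 3 * (1/2 - s.1) :=
        mul_le_mul_of_nonneg_right h1 (by linarith)
      apply max_le <;> rw [Real.dist_eq, abs_le] <;> constructor <;> linarith
  · -- i=2, j=0
    rcases le_or_gt 0 (t.1 - 1/2) with hw | hw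
    · have P : 1 * (t.1 - 1/2) ≤ Real.sqrt 3 * (t.1 - 1/2) :=
        mul_le_mul_of_nonneg_right h1 hw
      apply max_le <;> rw [Real.dist_eq, abs_le] <;> constructor <;> linarith
    · have P : 1 * (1/2 - t.1) ≤ Real.sqrt 3 * (1/2 - t.1) :=
        mul_le_mul_of_nonneg_right h1 (by linarith)
      apply max_le <;> rw [Real.dist_eq, abs_le] <;> constructor <;> linarith
  · -- i=2, j=1
    rcases le_or_gt 0 (t.1 - 1/2) with hw | hw
    · have P : 1 * (t.1 - 1/2) ≤ Real.sqrt 3 * (t.1 - 1/2) :=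
        mul_le_mul_of_nonneg_right h1 hw
      apply max_le <;> rw [Real.dist_eq, abs_le] <;> constructor <;> linarith
    · have P : 1 * (1/2 - t.1) ≤ Real.sqrt 3 * (1/2 - t.1) :=
        mul_le_mul_of_nonneg_right h1 (by linarith)
      apply max_le <;> rw [Real.dist_eq, abs_le] <;> constructor <;> linarith
  · exact absurd rfl hij


lemma SChain.map {K' : Set (ℝ×ℝ)} {x y : ℝ×ℝ} {m : ℕ} {ε : ℝ} (i : Fin 3)
    (h : SChain K' x y m ε) :
    SChain (sgMap i '' K') (sgMap i x) (sgMap i y) m (ε/2) := by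
  obtain ⟨z, h1, h2, h3, h4⟩ := h
  refine ⟨fun k => sgMap i (z k), by dsimp only; rw [h1], by dsimp only; rw [h2],
    fun k hk => ⟨z k, h3 k hk, rfl⟩, ?_⟩
  intro k hk
  rw [dist_sgMap]
  have := h4 k hk
  linarith

lemma half_pow (n : ℕ) : ((1/2:ℝ)^n)/2 = (1/2)^(n+1) := by rw [pow_succ]; ring

section Main
variable {K : Set (ℝ × ℝ)} (hKc : IsCompact K) (hKne : K.Nonempty)
  (hK : K = sgMap 0 '' K ∪ sgMap 1 '' K ∪ sgMap 2 '' K)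

include hKc hKne hK in
lemma diamK {x y : ℝ×ℝ} (hx : x ∈ K) (hy : y ∈ K) : dist x y ≤ 1 :=
  sgT_diam (K_sub_T hKc hKne hK hx) (K_sub_T hKc hKne hK hy)

include hKc hKne hK in
lemma chainA : ∀ (n : ℕ), ∀ x ∈ K, ∀ y ∈ K,
    ∃ m, m ≤ 2^n ∧ SChain K x y m ((1/2:ℝ)^n) := by
  intro n
  induction n with
  | zero =>
    intro x hx y hy
    exact ⟨1, le_refl _, SChain.single hx hy (by simpa using diamK hKc hKne hK hx hy)⟩
  | succ n ih =>
    intro x hx y hy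
    obtain ⟨i, x', hx', hxe⟩ := cover hK hx
    obtain ⟨j, y', hy', hye⟩ := cover hK hy
    by_cases hxj : x ∈ sgMap j '' K
    · obtain ⟨x'', hx'', hxe2⟩ := hxj
      obtain ⟨m, hm, hc⟩ := ih x'' hx'' y' hy'
      refine ⟨m, le_trans hm (Nat.pow_le_pow_right (by norm_num) (Nat.le_succ n)), ?_⟩
      have hc2 := ((hc.map j).mono_set (image_sub hK j)).mono_eps (le_of_eq (half_pow n))
      rwa [hxe2, hye] at hc2
    · have hij : i ≠ j := by rintro rfl; exact hxj ⟨x', hx', hxe⟩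
      obtain ⟨m₁, hm₁, hc₁⟩ := ih x' hx' (sgPt j) (sgPt_mem_K hKc hKne hK j)
      obtain ⟨m₂, hm₂, hc₂⟩ := ih y' hy' (sgPt i) (sgPt_mem_K hKc hKne hK i)
      have c1 : SChain K x (sgMap i (sgPt j)) m₁ ((1/2:ℝ)^(n+1)) := by
        have := ((hc₁.map i).mono_set (image_sub hK i)).mono_eps (le_of_eq (half_pow n))
        rwa [hxe] at this
      have c2 : SChain K (sgMap i (sgPt j)) y m₂ ((1/2:ℝ)^(n+1)) := by
        have := (((hc₂.map j).mono_set (image_sub hK j)).mono_eps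
          (le_of_eq (half_pow n))).symm
        rwa [hye, ← mid_comm i j] at this
      refine ⟨m₁ + m₂, ?_, c1.trans c2⟩
      calc m₁ + m₂ ≤ 2^n + 2^n := Nat.add_le_add hm₁ hm₂
        _ = 2^(n+1) := by ring

include hKc hKne hK in
lemma chainV : ∀ (n : ℕ), ∀ x ∈ K, ∀ j : Fin 3,
    ∃ m : ℕ, (m:ℝ) ≤ 2^(n+3) * dist x (sgPt j) + 1 ∧ SChain K x (sgPt j) m ((1/2:ℝ)^n) := by
  intro n
  induction n with
  | zero =>
    intro x hx j
    have hj := sgPt_mem_K hKc hKne hK j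
    refine ⟨1, ?_, SChain.single hx hj (by simpa using diamK hKc hKne hK hx hj)⟩
    have h0 : (0:ℝ) ≤ dist x (sgPt j) := dist_nonneg
    have hp : (0:ℝ) ≤ 2^(0+3) := by positivity
    push_cast
    nlinarith
  | succ n ih =>
    intro x hx j
    rcases le_or_gt (1/4:ℝ) (dist x (sgPt j)) with hd | hd
    · obtain ⟨m, hm, hc⟩ := chainA hKc hKne hK (n+1) x hx (sgPt j) (sgPt_mem_K hKc hKne hK j)
      refine ⟨m, ?_, hc⟩
      have hm' : (m:ℝ) ≤ 2^(n+1) := by exact_mod_cast hm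
      have e : (2:ℝ)^(n+1+3) = 2^(n+1) * 8 := by rw [pow_add]; norm_num
      have hp : (0:ℝ) < 2^(n+1) := by positivity
      rw [e]
      nlinarith
    · have hxj : x ∈ sgMap j '' K := by
        obtain ⟨i, x', hx', hxe⟩ := cover hK hx
        by_cases hij : i = j
        · exact ⟨x', hx', by rw [← hij]; exact hxe⟩
        · exfalso
          have := sep hij ⟨x', K_sub_T hKc hKne hK hx', hxe⟩
          linarith
      obtain ⟨x', hx', hxe⟩ := hxj
      obtain ⟨m, hm, hc⟩ := ih x' hx' j
      have hdd : dist x' (sgPt j) = 2 * dist x (sgPt j) := by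
        have := dist_sgMap j x' (sgPt j)
        rw [hxe, sgMap_fixed] at this
        linarith
      refine ⟨m, ?_, ?_⟩
      · rw [hdd] at hm
        have e : (2:ℝ)^(n+1+3) = 2^(n+3) * 2 := by rw [pow_succ]
        rw [e]
        linarith
      · have := ((hc.map j).mono_set (image_sub hK j)).mono_eps (le_of_eq (half_pow n))
        rwa [hxe, sgMap_fixed] at this

include hKc hKne hK in
lemma chainW : ∀ (n : ℕ), ∀ x ∈ K, ∀ y ∈ K,
    ∃ m : ℕ, (m:ℝ) ≤ 2^(n+6) * dist x y + 2 ∧ SChain K x y m ((1/2:ℝ)^n) := by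
  intro n
  induction n with
  | zero =>
    intro x hx y hy
    refine ⟨1, ?_, SChain.single hx hy (by simpa using diamK hKc hKne hK hx hy)⟩
    have h0 : (0:ℝ) ≤ dist x y := dist_nonneg
    have hp : (0:ℝ) ≤ 2^(0+6) := by positivity
    push_cast
    nlinarith
  | succ n ih =>
    intro x hx y hy
    obtain ⟨i, x', hx', hxe⟩ := cover hK hx
    obtain ⟨j, y', hy', hye⟩ := cover hK hy
    by_cases hxj : x ∈ sgMap j '' K
    · obtain ⟨x'', hx'', hxe2⟩ := hxj
      obtain ⟨m, hm, hc⟩ := ih x'' hx'' y' hy'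
      have hdd : dist x'' y' = 2 * dist x y := by
        have := dist_sgMap j x'' y'
        rw [hxe2, hye] at this
        linarith
      refine ⟨m, ?_, ?_⟩
      · rw [hdd] at hm
        have e : (2:ℝ)^(n+1+6) = 2^(n+6) * 2 := by rw [pow_succ]
        rw [e]
        linarith
      · have := ((hc.map j).mono_set (image_sub hK j)).mono_eps (le_of_eq (half_pow n))
        rwa [hxe2, hye] at this
    · have hij : i ≠ j := by rintro rfl; exact hxj ⟨x', hx', hxe⟩
      have hxT : x ∈ sgMap i '' sgT := ⟨x', K_sub_T hKc hKne hK hx', hxe⟩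
      have hyT : y ∈ sgMap j '' sgT := ⟨y', K_sub_T hKc hKne hK hy', hye⟩
      have hq1 : dist x (sgMap i (sgPt j)) ≤ 4 * dist x y := geo hij hxT hyT
      have hq2 : dist y (sgMap j (sgPt i)) ≤ 4 * dist x y := by
        have := geo hij.symm hyT hxT
        rwa [dist_comm y x] at this
      obtain ⟨m₁, hm₁, hc₁⟩ := chainV hKc hKne hK n x' hx' j
      obtain ⟨m₂, hm₂, hc₂⟩ := chainV hKc hKne hK n y' hy' i
      have hd1 : dist x' (sgPt j) = 2 * dist x (sgMap i (sgPt j)) := by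
        have := dist_sgMap i x' (sgPt j)
        rw [hxe] at this
        linarith
      have hd2 : dist y' (sgPt i) = 2 * dist y (sgMap j (sgPt i)) := by
        have := dist_sgMap j y' (sgPt i)
        rw [hye] at this
        linarith
      have c1 : SChain K x (sgMap i (sgPt j)) m₁ ((1/2:ℝ)^(n+1)) := by
        have := ((hc₁.map i).mono_set (image_sub hK i)).mono_eps (le_of_eq (half_pow n))
        rwa [hxe] at this
      have c2 : SChain K (sgMap i (sgPt j)) y m₂ ((1/2:ℝ)^(n+1)) := by
        have := (((hc₂.map j).mono_set (image_sub hK j)).mono_eps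
          (le_of_eq (half_pow n))).symm
        rwa [hye, ← mid_comm i j] at this
      refine ⟨m₁ + m₂, ?_, c1.trans c2⟩
      rw [hd1] at hm₁
      rw [hd2] at hm₂
      have hp : (0:ℝ) ≤ 2^(n+3) := by positivity
      have k1 := mul_le_mul_of_nonneg_left hq1 hp
      have k2 := mul_le_mul_of_nonneg_left hq2 hp
      have e : (2:ℝ)^(n+1+6) = 2^(n+3) * 16 := by ring
      push_cast
      rw [e]
      nlinarith

end Main

/-- The Sierpiński gasket satisfies the chain condition: points can be joined by chains
of `N` steps of length `≲ |x-y|/N`. -/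
theorem stmt_15 (K : Set (ℝ × ℝ)) (hKc : IsCompact K) (hKne : K.Nonempty)
    (hK : K = sgMap 0 '' K ∪ sgMap 1 '' K ∪ sgMap 2 '' K) :
    ∃ C₁ : ℝ, 0 < C₁ ∧ ∀ x ∈ K, ∀ y ∈ K, ∀ N : ℕ, 0 < N →
      ∃ z : ℕ → ℝ × ℝ, z 0 = x ∧ z N = y ∧ (∀ i ≤ N, z i ∈ K) ∧
        ∀ i < N, dist (z i) (z (i + 1)) ≤ C₁ * dist x y / N := by
  refine ⟨512, by norm_num, ?_⟩
  intro x hx y hy N hN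
  have hd0 : (0:ℝ) ≤ dist x y := dist_nonneg
  have hNR : (0:ℝ) < N := by exact_mod_cast hN
  have hεnn : (0:ℝ) ≤ 512 * dist x y / N := by positivity
  by_cases hsmall : dist x y * N ≤ 512 * dist x y
  · have hstep : dist x y ≤ 512 * dist x y / N := by
      rw [le_div_iff₀ hNR]
      linarith
    have := (SChain.single hx hy hstep).pad hεnn hN
    exact this
  · push_neg at hsmall
    have hd : 0 < dist x y := by
      rcases eq_or_lt_of_le hd0 with h | h
      · exfalso; rw [← h] at hsmall; simp at hsmall
      · exact h
    have hN512 : (512:ℝ) < N := by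
      by_contra hcon
      push_neg at hcon
      nlinarith
    set r : ℝ := N / (256 * dist x y) with hr
    have hr1 : (1:ℝ) ≤ r := by
      rw [hr, le_div_iff₀ (by positivity)]
      have := diamK hKc hKne hK hx hy
      nlinarith
    have hk1 : 1 ≤ ⌊r⌋₊ := Nat.le_floor (by push_cast; exact hr1)
    set n : ℕ := Nat.log 2 ⌊r⌋₊ with hn
    have h2n : (2:ℝ)^n ≤ r := by
      have h1' : (2:ℝ)^n ≤ (⌊r⌋₊ : ℝ) := by
        exact_mod_cast Nat.pow_log_le_self 2 (by omega)
      exact h1'.trans (Nat.floor_le (by positivity))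
    have hr2 : r < (2:ℝ)^(n+1) := by
      calc r < ⌊r⌋₊ + 1 := Nat.lt_floor_add_one r
        _ ≤ (2:ℝ)^(n+1) := by
            exact_mod_cast Nat.lt_pow_succ_log_self (by norm_num) ⌊r⌋₊
    obtain ⟨m, hm, hc⟩ := chainW hKc hKne hK n x hx y hy
    have h2n' : (2:ℝ)^n * (256 * dist x y) ≤ N := by
      rw [hr, le_div_iff₀ (by positivity)] at h2n
      exact h2n
    have hmN : m ≤ N := by
      have e : (2:ℝ)^(n+6) = 2^n * 64 := by rw [pow_add]; norm_num
      rw [e] at hm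
      have : (m:ℝ) ≤ (N:ℝ) := by nlinarith
      exact_mod_cast this
    have hstep : ((1/2:ℝ))^n ≤ 512 * dist x y / N := by
      rw [hr, div_lt_iff₀ (by positivity)] at hr2
      rw [div_pow, one_pow, div_le_div_iff₀ (by positivity) hNR]
      have e : (2:ℝ)^(n+1) = 2^n * 2 := by rw [pow_succ]
      rw [e] at hr2
      nlinarith
    exact (hc.mono_eps hstep).pad hεnn hmN
end

section
/- Let (K,d,ν) be a compact metric measure space of diameter ≤ 1 satisfying the chain condition with constant C₁ and such that ν(B(z,r)) ≍ r^α for all z ∈ K, 0 < r ≤ 1. Then for every integer n ≥ 1 there exists C = C(n) > 0 such that for all u ∈ L²(K;ν): ∬_{K×K} (u(x)-u(y))² dν(x)dν(y) ≤ C ∬_{d(x,y) ≤ 2^{-n}} (u(x)-u(y))² dν(y)dν(x). -/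
/-!
Write `F x = ∫_{d(x,y) ≤ ε} (u x - u y)² dν(y)` and `E = ∫ F dν` for `ε = 2⁻ⁿ`. Join `x` to `y`
by a chain `z₀, …, z_N` with steps `≤ ε/2`, where `N` depends only on `ε` and `C₁` because the
diameter is at most `1`, and let `gᵢ` be the mean of `u` on the ball `Bᵢ = B(zᵢ, ε/4)`. Every point
of `Bᵢ` is within `ε` of every point of `B_{i+1}`, and `ν Bᵢ ≥ m = c₁ (ε/4)^α`, so Jensen's
inequality gives `(u x - g₀)² ≤ F x / m`, `(g_N - u y)² ≤ F y / m` and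
`(gᵢ - gᵢ₊₁)² ≤ E / m²`. Cauchy–Schwarz along the chain bounds `(u x - u y)²` by a combination of
`F x`, `F y` and `E`, and integrating in `x` and `y` bounds the full energy by a multiple of `E`.
-/

open MeasureTheory Set Finset
open scoped ENNReal

section Jensen

variable {Ω : Type*} [MeasurableSpace Ω] {ν : Measure Ω} [IsFiniteMeasure ν]

theorem setAverage_const_sub {u : Ω → ℝ} {B : Set Ω} (hB : ν B ≠ 0) (hu : IntegrableOn u B ν)
    (c : ℝ) : ⨍ y in B, (c - u y) ∂ν = c - ⨍ y in B, u y ∂ν := by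
  rw [setAverage_eq, setAverage_eq, integral_sub (integrable_const c) hu, smul_sub,
    ← setAverage_eq, setAverage_const hB (measure_ne_top ν B)]

theorem ofReal_sq_sub_setAverage_le {u : Ω → ℝ} (hu : MemLp u 2 ν) {B : Set Ω} (hB : ν B ≠ 0)
    (c : ℝ) : ENNReal.ofReal ((c - ⨍ y in B, u y ∂ν) ^ 2) ≤
      (∫⁻ y in B, ENNReal.ofReal ((c - u y) ^ 2) ∂ν) / ν B := by
  have hcu : MemLp (fun y => c - u y) 2 ν := (memLp_const c).sub hu
  have hjensen : (c - ⨍ y in B, u y ∂ν) ^ 2 ≤ ⨍ y in B, (c - u y) ^ 2 ∂ν := by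
    rw [← setAverage_const_sub hB (hu.integrable one_le_two).integrableOn]
    exact even_two.convexOn_pow.map_set_average_le (continuous_pow 2).continuousOn isClosed_univ
      hB (measure_ne_top ν B) (.of_forall fun _ => mem_univ _)
      (hcu.integrable one_le_two).integrableOn hcu.integrable_sq.integrableOn
  calc ENNReal.ofReal ((c - ⨍ y in B, u y ∂ν) ^ 2)
      ≤ ENNReal.ofReal (⨍ y in B, (c - u y) ^ 2 ∂ν) := ENNReal.ofReal_le_ofReal hjensen
    _ = _ := ofReal_setAverage hcu.integrable_sq.integrableOn (.of_forall fun _ => sq_nonneg _)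

end Jensen

theorem ENNReal.ofReal_sq_sub_le_of_forall_lt {g : ℕ → ℝ} {N : ℕ} {β : ℝ≥0∞}
    (h : ∀ i < N, ENNReal.ofReal ((g i - g (i + 1)) ^ 2) ≤ β) :
    ENNReal.ofReal ((g 0 - g N) ^ 2) ≤ N ^ 2 * β := by
  have hCS : (g 0 - g N) ^ 2 ≤ N * ∑ i ∈ range N, (g i - g (i + 1)) ^ 2 := by
    have := sq_sum_le_card_mul_sum_sq (s := range N) (f := fun i => g i - g (i + 1))
    rwa [sum_range_sub', card_range] at this
  calc ENNReal.ofReal ((g 0 - g N) ^ 2)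
      ≤ N * ∑ i ∈ range N, ENNReal.ofReal ((g i - g (i + 1)) ^ 2) := by
        rw [← ENNReal.ofReal_sum_of_nonneg fun _ _ => sq_nonneg _, ← ENNReal.ofReal_natCast,
          ← ENNReal.ofReal_mul N.cast_nonneg]
        exact ENNReal.ofReal_le_ofReal hCS
    _ ≤ N * (N * β) := by
        gcongr
        simpa using sum_le_card_nsmul (range N) _ β fun i hi => h i (mem_range.1 hi)
    _ = N ^ 2 * β := by ring

theorem ENNReal.ofReal_sq_add_add_le (a b c : ℝ) :
    ENNReal.ofReal ((a + b + c) ^ 2) ≤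
      3 * (ENNReal.ofReal (a ^ 2) + ENNReal.ofReal (b ^ 2) + ENNReal.ofReal (c ^ 2)) := by
  rw [← ENNReal.ofReal_add (sq_nonneg _) (sq_nonneg _),
    ← ENNReal.ofReal_add (by positivity) (sq_nonneg _), ← ENNReal.ofReal_ofNat 3,
    ← ENNReal.ofReal_mul zero_le_three]
  exact ENNReal.ofReal_le_ofReal
    (by nlinarith [sq_nonneg (a - b), sq_nonneg (b - c), sq_nonneg (a - c)])

def ChainCondition (X : Type*) [PseudoMetricSpace X] (C₁ : ℝ) : Prop :=
  ∀ x y : X, ∀ N : ℕ, 0 < N →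
    ∃ z : ℕ → X, z 0 = x ∧ z N = y ∧ ∀ i < N, dist (z i) (z (i + 1)) ≤ C₁ * dist x y / N

theorem ChainCondition.exists_chain_dist_le {X : Type*} [PseudoMetricSpace X] {C₁ D : ℝ}
    (hchain : ChainCondition X C₁) (hC₁ : 0 ≤ C₁) (hD : ∀ x y : X, dist x y ≤ D) {δ : ℝ}
    (hδ : 0 < δ) : ∃ N : ℕ, ∀ x y : X,
      ∃ z : ℕ → X, z 0 = x ∧ z N = y ∧ ∀ i < N, dist (z i) (z (i + 1)) ≤ δ := by
  set N := ⌈C₁ * D / δ⌉₊ + 1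
  have hN : (0 : ℝ) < N := by positivity
  have hCD : C₁ * D ≤ δ * N := by
    rw [← div_le_iff₀' hδ]
    exact (Nat.le_ceil _).trans (by norm_cast; omega)
  refine ⟨N, fun x y => ?_⟩
  obtain ⟨z, hz0, hzN, hz⟩ := hchain x y N (by exact_mod_cast hN)
  refine ⟨z, hz0, hzN, fun i hi => (hz i hi).trans ?_⟩
  rw [div_le_iff₀ hN]
  exact (mul_le_mul_of_nonneg_left (hD x y) hC₁).trans hCD

section LocalEnergy

variable {X : Type*} [MetricSpace X] [MeasurableSpace X] {ν : Measure X}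

noncomputable def localEnergy (ν : Measure X) (u : X → ℝ) (ε : ℝ) (x : X) : ℝ≥0∞ :=
  ∫⁻ y in {y | dist x y ≤ ε}, ENNReal.ofReal ((u x - u y) ^ 2) ∂ν

theorem measurable_localEnergy [BorelSpace X] [SecondCountableTopology X] [SFinite ν]
    {u : X → ℝ} (hu : Measurable u) (ε : ℝ) : Measurable (localEnergy ν u ε) := by
  have hS : MeasurableSet {p : X × X | dist p.1 p.2 ≤ ε} :=
    measurableSet_le measurable_dist measurable_const
  have hf : Measurable fun p : X × X => ENNReal.ofReal ((u p.1 - u p.2) ^ 2) := by fun_prop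
  convert (hf.indicator hS).lintegral_prod_right' (ν := ν) using 1
  funext x
  rw [localEnergy, ← lintegral_indicator (measurableSet_le (by fun_prop) (by fun_prop))]
  rfl

theorem ofReal_sq_sub_setAverage_le_localEnergy [IsFiniteMeasure ν] {u : X → ℝ}
    (hu : MemLp u 2 ν) {x : X} {ε : ℝ} {B : Set X} (hB : B ⊆ {y | dist x y ≤ ε}) {m : ℝ≥0∞}
    (hm0 : m ≠ 0) (hm : m ≤ ν B) :
    ENNReal.ofReal ((u x - ⨍ y in B, u y ∂ν) ^ 2) ≤ m⁻¹ * localEnergy ν u ε x := by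
  refine (ofReal_sq_sub_setAverage_le hu (ne_bot_of_le_ne_bot hm0 hm) (u x)).trans ?_
  rw [ENNReal.div_eq_inv_mul]
  exact mul_le_mul' (ENNReal.inv_le_inv.2 hm) (lintegral_mono_set hB)

theorem ofReal_sq_sub_le_of_chain [OpensMeasurableSpace X] [IsFiniteMeasure ν] {u : X → ℝ}
    (hu : MemLp u 2 ν) {ε : ℝ} (hε : 0 ≤ ε) {m : ℝ≥0∞} (hm0 : m ≠ 0)
    (hball : ∀ z, m ≤ ν (Metric.ball z (ε / 4)))
    {N : ℕ} {z : ℕ → X} {x y : X} (hz0 : z 0 = x) (hzN : z N = y)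
    (hz : ∀ i < N, dist (z i) (z (i + 1)) ≤ ε / 2) :
    ENNReal.ofReal ((u x - u y) ^ 2) ≤
      3 * m⁻¹ * (localEnergy ν u ε x + localEnergy ν u ε y) +
        3 * N ^ 2 * m⁻¹ ^ 2 * ∫⁻ w, localEnergy ν u ε w ∂ν := by
  set F := localEnergy ν u ε
  set g : ℕ → ℝ := fun i => ⨍ w in Metric.ball (z i) (ε / 4), u w ∂ν
  have hnear : ∀ w j, dist w (z j) ≤ 3 * ε / 4 →
      ENNReal.ofReal ((u w - g j) ^ 2) ≤ m⁻¹ * F w := by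
    refine fun w j hw =>
      ofReal_sq_sub_setAverage_le_localEnergy hu (fun w' hw' => ?_) hm0 (hball _)
    have := Metric.mem_ball.1 hw'
    have := dist_triangle_right w w' (z j)
    show dist w w' ≤ ε
    linarith
  have hx : ENNReal.ofReal ((u x - g 0) ^ 2) ≤ m⁻¹ * F x :=
    hnear x 0 (by rw [hz0, dist_self]; positivity)
  have hy : ENNReal.ofReal ((g N - u y) ^ 2) ≤ m⁻¹ * F y := by
    rw [sub_sq_comm]
    exact hnear y N (by rw [hzN, dist_self]; positivity)
  have hstep : ∀ i < N,
      ENNReal.ofReal ((g i - g (i + 1)) ^ 2) ≤ m⁻¹ * (m⁻¹ * ∫⁻ w, F w ∂ν) := by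
    intro i hi
    have hB : ν (Metric.ball (z i) (ε / 4)) ≠ 0 := ne_bot_of_le_ne_bot hm0 (hball _)
    rw [sub_sq_comm]
    refine (ofReal_sq_sub_setAverage_le hu hB _).trans ?_
    rw [ENNReal.div_eq_inv_mul]
    refine mul_le_mul' (ENNReal.inv_le_inv.2 (hball _)) ?_
    calc ∫⁻ w in Metric.ball (z i) (ε / 4), ENNReal.ofReal ((g (i + 1) - u w) ^ 2) ∂ν
        ≤ ∫⁻ w in Metric.ball (z i) (ε / 4), m⁻¹ * F w ∂ν := by
          refine setLIntegral_mono' measurableSet_ball fun w hw => ?_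
          rw [sub_sq_comm]
          refine hnear w (i + 1) ?_
          have := Metric.mem_ball.1 hw
          linarith [dist_triangle w (z i) (z (i + 1)), hz i hi]
      _ ≤ ∫⁻ w, m⁻¹ * F w ∂ν := setLIntegral_le_lintegral _ _
      _ = m⁻¹ * ∫⁻ w, F w ∂ν := lintegral_const_mul' _ _ (ENNReal.inv_ne_top.2 hm0)
  calc ENNReal.ofReal ((u x - u y) ^ 2)
      = ENNReal.ofReal (((u x - g 0) + (g 0 - g N) + (g N - u y)) ^ 2) := by ring_nf
    _ ≤ 3 * (ENNReal.ofReal ((u x - g 0) ^ 2) + ENNReal.ofReal ((g 0 - g N) ^ 2) +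
          ENNReal.ofReal ((g N - u y) ^ 2)) := ENNReal.ofReal_sq_add_add_le _ _ _
    _ ≤ 3 * (m⁻¹ * F x + N ^ 2 * (m⁻¹ * (m⁻¹ * ∫⁻ w, F w ∂ν)) + m⁻¹ * F y) := by
        gcongr
        exact ENNReal.ofReal_sq_sub_le_of_forall_lt hstep
    _ = _ := by ring

end LocalEnergy

section Integration

variable {X : Type*} [MeasurableSpace X] {ν : Measure X}

theorem lintegral_lintegral_congr_ae {u v : X → ℝ} (huv : u =ᵐ[ν] v) {κ : X → Measure X}
    (hκ : ∀ x, κ x ≪ ν) (Φ : ℝ → ℝ → ℝ≥0∞) :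
    ∫⁻ x, ∫⁻ y, Φ (u x) (u y) ∂κ x ∂ν = ∫⁻ x, ∫⁻ y, Φ (v x) (v y) ∂κ x ∂ν := by
  refine lintegral_congr_ae (huv.mono fun x hx => lintegral_congr_ae ?_)
  filter_upwards [hκ x huv] with y hy
  rw [hx, hy]

theorem lintegral_lintegral_le_of_le_add {f : X → X → ℝ≥0∞} {F : X → ℝ≥0∞} (hF : Measurable F)
    {A B : ℝ≥0∞} (h : ∀ x y, f x y ≤ A * (F x + F y) + B * ∫⁻ z, F z ∂ν) :
    ∫⁻ x, ∫⁻ y, f x y ∂ν ∂ν ≤ (2 * A * ν univ + B * ν univ ^ 2) * ∫⁻ z, F z ∂ν := by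
  calc ∫⁻ x, ∫⁻ y, f x y ∂ν ∂ν
      ≤ ∫⁻ x, ∫⁻ y, (A * (F x + F y) + B * ∫⁻ z, F z ∂ν) ∂ν ∂ν :=
        lintegral_mono fun x => lintegral_mono (h x)
    _ = ∫⁻ x, (A * ν univ * F x + (A + B * ν univ) * ∫⁻ z, F z ∂ν) ∂ν := by
        refine lintegral_congr fun x => ?_
        rw [lintegral_add_right _ measurable_const, lintegral_const_mul _ (hF.const_add (F x)),
          lintegral_add_left measurable_const, lintegral_const, lintegral_const]
        ring
    _ = _ := by
        rw [lintegral_add_right _ measurable_const, lintegral_const_mul _ hF, lintegral_const]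
        ring

end Integration

theorem stmt_16_general {X : Type*} [MetricSpace X] [CompactSpace X] [MeasurableSpace X]
    [BorelSpace X] (ν : Measure X) [IsFiniteMeasure ν] (α : ℝ)
    (hdiam : Metric.diam (Set.univ : Set X) ≤ 1)
    (C₁ : ℝ) (hC₁ : 0 < C₁)
    (hchain : ∀ x y : X, ∀ N : ℕ, 0 < N →
      ∃ z : ℕ → X, z 0 = x ∧ z N = y ∧
        ∀ i < N, dist (z i) (z (i + 1)) ≤ C₁ * dist x y / N)
    (c₁ c₂ : ℝ) (hc₁ : 0 < c₁)
    (hAhlfors : ∀ (z : X) (r : ℝ), 0 < r → r ≤ 1 →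
      ENNReal.ofReal (c₁ * r ^ α) ≤ ν (Metric.ball z r) ∧
        ν (Metric.ball z r) ≤ ENNReal.ofReal (c₂ * r ^ α)) :
    ∀ n : ℕ, 1 ≤ n → ∃ C : ℝ, 0 < C ∧
      ∀ u : X → ℝ, MemLp u 2 ν →
        ∫⁻ x, ∫⁻ y, ENNReal.ofReal ((u x - u y) ^ 2) ∂ν ∂ν ≤
          ENNReal.ofReal C *
            ∫⁻ x, ∫⁻ y in {y | dist x y ≤ (2 : ℝ) ^ (-(n : ℝ))},
              ENNReal.ofReal ((u x - u y) ^ 2) ∂ν ∂ν := by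
  intro n _
  set ε : ℝ := (2 : ℝ) ^ (-(n : ℝ))
  have hε : 0 < ε := by positivity
  have hε₁ : ε ≤ 1 := Real.rpow_le_one_of_one_le_of_nonpos one_le_two (by simp)
  obtain ⟨N, hN⟩ := ChainCondition.exists_chain_dist_le hchain hC₁.le
    (fun x y => (Metric.dist_le_diam_of_mem isCompact_univ.isBounded trivial trivial).trans hdiam)
    (half_pos hε)
  set m := ENNReal.ofReal (c₁ * (ε / 4) ^ α)
  have hm0 : m ≠ 0 := (ENNReal.ofReal_pos.2 (by positivity)).ne'
  have hball : ∀ z, m ≤ ν (Metric.ball z (ε / 4)) :=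
    fun z => (hAhlfors z _ (by positivity) (by linarith)).1
  set D := 2 * (3 * m⁻¹) * ν univ + 3 * N ^ 2 * m⁻¹ ^ 2 * ν univ ^ 2
  have hD : D ≠ ⊤ := by have := ENNReal.inv_ne_top.2 hm0; finiteness
  refine ⟨D.toReal + 1, by positivity, fun u hu => ?_⟩
  obtain ⟨v, hv, huv⟩ := hu.aestronglyMeasurable
  rw [lintegral_lintegral_congr_ae huv (fun _ => .rfl) fun a b => ENNReal.ofReal ((a - b) ^ 2),
    lintegral_lintegral_congr_ae huv (fun _ => Measure.absolutelyContinuous_restrict)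
      fun a b => ENNReal.ofReal ((a - b) ^ 2)]
  calc ∫⁻ x, ∫⁻ y, ENNReal.ofReal ((v x - v y) ^ 2) ∂ν ∂ν
      ≤ D * ∫⁻ x, localEnergy ν v ε x ∂ν :=
        lintegral_lintegral_le_of_le_add (measurable_localEnergy hv.measurable ε) fun x y => by
          obtain ⟨z, hz0, hzN, hz⟩ := hN x y
          exact ofReal_sq_sub_le_of_chain (hu.ae_eq huv) hε.le hm0 hball hz0 hzN hz
    _ ≤ ENNReal.ofReal (D.toReal + 1) * ∫⁻ x, localEnergy ν v ε x ∂ν := by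
        gcongr
        exact (ENNReal.le_ofReal_iff_toReal_le hD (by positivity)).2 (by linarith)

/-- On a compact Ahlfors-regular metric measure space of diameter `≤ 1` satisfying the
chain condition, the full double integral of squared increments is controlled by the
near-diagonal double integral. -/
theorem stmt_16 {X : Type*} [MetricSpace X] [CompactSpace X] [MeasurableSpace X]
    [BorelSpace X] (ν : Measure X) [IsFiniteMeasure ν] (α : ℝ) (hα : 0 < α)
    (hdiam : Metric.diam (Set.univ : Set X) ≤ 1)
    (C₁ : ℝ) (hC₁ : 0 < C₁)
    (hchain : ∀ x y : X, ∀ N : ℕ, 0 < N →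
      ∃ z : ℕ → X, z 0 = x ∧ z N = y ∧
        ∀ i < N, dist (z i) (z (i + 1)) ≤ C₁ * dist x y / N)
    (c₁ c₂ : ℝ) (hc₁ : 0 < c₁) (hc₂ : 0 < c₂)
    (hAhlfors : ∀ (z : X) (r : ℝ), 0 < r → r ≤ 1 →
      ENNReal.ofReal (c₁ * r ^ α) ≤ ν (Metric.ball z r) ∧
        ν (Metric.ball z r) ≤ ENNReal.ofReal (c₂ * r ^ α)) :
    ∀ n : ℕ, 1 ≤ n → ∃ C : ℝ, 0 < C ∧
      ∀ u : X → ℝ, MemLp u 2 ν →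
        ∫⁻ x, ∫⁻ y, ENNReal.ofReal ((u x - u y) ^ 2) ∂ν ∂ν ≤
          ENNReal.ofReal C *
            ∫⁻ x, ∫⁻ y in {y | dist x y ≤ (2 : ℝ) ^ (-(n : ℝ))},
              ENNReal.ofReal ((u x - u y) ^ 2) ∂ν ∂ν :=
  stmt_16_general ν α hdiam C₁ hC₁ hchain c₁ c₂ hc₁ hAhlfors
end
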